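/- Let ℱ be a Hausdorff locally convex space, H a Hausdorff locally convex space, E a Hausdorff locally convex space, V ⊆ E nonempty open, and f₋ ∈ C^k((−∞,0)×V, F), f₊ ∈ C^k((0,∞)×V, F). Suppose for each 0 ≤ ℓ ≤ k there is a continuous map Φ^ℓ : ℝ × V̄' × (ℝ×E)^ℓ → F (where V ⊆ V̄' ⊆ closure(V)) restricting to d^ℓf₋ on (−∞,0)×V×(ℝ×E)^ℓ and to d^ℓf₊ on (0,∞)×V×(ℝ×E)^ℓ. Then f̃ := Φ⁰|_{ℝ×V} is C^k on ℝ×V with d^ℓf̃ = Φ^ℓ|_{ℝ×V×(ℝ×E)^ℓ} for all 0 ≤ ℓ ≤ k. -/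

import Mathlib

open Filter Topology Set

/-- Directional (Gateaux) derivative in the Bastiani sense. -/
def HasDirDeriv {E F : Type*} [AddCommGroup E] [Module ℝ E] [TopologicalSpace E]
    [AddCommGroup F] [Module ℝ F] [TopologicalSpace F]
    (f : E → F) (x v : E) (L : F) : Prop :=
  Tendsto (fun t : ℝ => t⁻¹ • (f (x + t • v) - f x)) (𝓝[≠] (0:ℝ)) (𝓝 L)

/-- `D` is the family of iterated Bastiani differentials of `f` on `U` up to order `k`:
`D ℓ x v` represents `d^ℓ f(x; v 0, …, v (ℓ-1))`; `D (ℓ+1) x v` is the directional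
derivative of `y ↦ D ℓ y v` at `x` in direction `v ℓ`, and each `D ℓ` is jointly
continuous on `U` (so `f` is of class `C^k` in the Bastiani sense, with differentials `D`). -/
structure BastianiFamily {E F : Type*} [AddCommGroup E] [Module ℝ E] [TopologicalSpace E]
    [AddCommGroup F] [Module ℝ F] [TopologicalSpace F]
    (k : ℕ∞) (U : Set E) (f : E → F) (D : ℕ → E → (ℕ → E) → F) : Prop where
  zeroth : ∀ x v, D 0 x v = f x
  deriv : ∀ ℓ : ℕ, (ℓ : ℕ∞) < k → ∀ x ∈ U, ∀ v : ℕ → E,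
    HasDirDeriv (fun y => D ℓ y v) x (v ℓ) (D (ℓ + 1) x v)
  cont : ∀ ℓ : ℕ, (ℓ : ℕ∞) ≤ k →
    ContinuousOn (fun p : E × (ℕ → E) => D ℓ p.1 p.2) (U ×ˢ univ)

/-- A closed-in-`U` subset `A` is harmonic if from each of its points one can escape
`A` along a continuous path, stably under perturbations in any fixed direction. -/
def IsHarmonic {H : Type*} [AddCommGroup H] [Module ℝ H] [TopologicalSpace H]
    (U A : Set H) : Prop :=
  ∀ x ∈ A, ∀ v : H, ∃ δ : ℝ, 0 < δ ∧ ∃ γ : ℝ → H,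
    ContinuousOn γ (Icc 0 1) ∧ γ 0 = 0 ∧
    ∀ s ∈ Ioc (0:ℝ) 1, ∀ r ∈ Icc (-δ) δ, x + γ s + r • v ∈ U \ A

/-! Off the hyperplane `t = 0` the glued family agrees with `Dm` or `Dp`, so only points of the
hyperplane need an argument. Pair with a continuous functional: along a line `τ ↦ y + τ • v`
whose base point `y` is off the hyperplane, the real function `τ ↦ λ (Φ ℓ (y + τ • v))` is
differentiable except at the (at most one) crossing, so the fundamental theorem of calculus
with countably many exceptions bounds its difference quotients by bounds on
`λ (Φ (ℓ + 1) ·)`. Letting `y` tend to the point keeps these bounds by continuity of `Φ ℓ`, and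
Hahn–Banach separation from closed convex neighbourhoods of `0` turns them into convergence of
the vector-valued difference quotients. -/

open MeasureTheory

theorem inv_mul_intervalIntegral_le {φ : ℝ → ℝ} {s u : ℝ} (hs : s ≠ 0)
    (hφ : IntervalIntegrable φ volume 0 s) (hu : ∀ τ ∈ uIcc 0 s, φ τ ≤ u) :
    s⁻¹ * ∫ τ in (0 : ℝ)..s, φ τ ≤ u := by
  have hrescale : s⁻¹ * ∫ τ in (0 : ℝ)..s, φ τ = ∫ t in (0 : ℝ)..1, φ (s * t) := by
    rw [intervalIntegral.integral_comp_mul_left φ hs, mul_zero, mul_one, smul_eq_mul]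
  have hint : IntervalIntegrable (fun t => φ (s * t)) volume 0 1 := by
    simpa [hs] using hφ.comp_mul_left (c := s)
  rw [hrescale]
  calc ∫ t in (0 : ℝ)..1, φ (s * t) ≤ ∫ t in (0 : ℝ)..1, u :=
        intervalIntegral.integral_mono_on zero_le_one hint intervalIntegrable_const
          fun t ht => hu _ <| by
            rcases le_total 0 s with h | h
            · rw [uIcc_of_le h]; constructor <;> nlinarith [ht.1, ht.2]
            · rw [uIcc_of_ge h]; constructor <;> nlinarith [ht.1, ht.2]
    _ = u := by simp

theorem slope_le_of_hasDerivAt_off_countable {φ φ' : ℝ → ℝ} {s u : ℝ} {C : Set ℝ}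
    (hC : C.Countable) (hs : s ≠ 0) (hφ : ContinuousOn φ (uIcc 0 s))
    (hφ' : ContinuousOn φ' (uIcc 0 s))
    (hderiv : ∀ τ ∈ uIcc 0 s \ C, HasDerivAt φ (φ' τ) τ) (hu : ∀ τ ∈ uIcc 0 s, φ' τ ≤ u) :
    s⁻¹ * (φ s - φ 0) ≤ u := by
  rw [← integral_eq_of_hasDerivAt_off_countable φ φ' hC hφ
    (fun τ hτ => hderiv τ ⟨Ioo_subset_Icc_self hτ.1, hτ.2⟩) hφ'.intervalIntegrable]
  exact inv_mul_intervalIntegral_le hs hφ'.intervalIntegrable hu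

theorem exists_mem_nhds_zero_convex_isClosed_subset {F : Type*} [AddCommGroup F] [Module ℝ F]
    [TopologicalSpace F] [IsTopologicalAddGroup F] [ContinuousSMul ℝ F] [LocallyConvexSpace ℝ F]
    {N : Set F} (hN : N ∈ 𝓝 0) : ∃ K ∈ 𝓝 (0 : F), Convex ℝ K ∧ IsClosed K ∧ K ⊆ N := by
  obtain ⟨C, ⟨hC, hCclosed⟩, hCN⟩ := (closed_nhds_basis (0 : F)).mem_iff.1 hN
  obtain ⟨W, ⟨hW, hWconv⟩, hWC⟩ := (LocallyConvexSpace.convex_basis_zero ℝ F).mem_iff.1 hC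
  exact ⟨closure W, mem_of_superset hW subset_closure, hWconv.closure, isClosed_closure,
    (closure_minimal hWC hCclosed).trans hCN⟩

section DirDeriv

variable {H F : Type*} [AddCommGroup H] [Module ℝ H] [TopologicalSpace H]
  [AddCommGroup F] [Module ℝ F] [TopologicalSpace F]

theorem HasDirDeriv.congr_of_eventuallyEq [IsTopologicalAddGroup H] [ContinuousSMul ℝ H]
    {f g : H → F} {x v : H} {L : F} (h : HasDirDeriv g x v L) (hfg : f =ᶠ[𝓝 x] g) :
    HasDirDeriv f x v L := by
  have hline : Tendsto (fun t : ℝ => x + t • v) (𝓝[≠] 0) (𝓝 x) := by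
    refine (Continuous.tendsto' (by fun_prop) 0 x (by simp)).mono_left nhdsWithin_le_nhds
  refine h.congr' ?_
  filter_upwards [hline.eventually hfg] with t ht
  rw [ht, hfg.eq_of_nhds]

theorem HasDirDeriv.hasDerivAt_comp_line {f : H → F} {y v : H} {L : F} {τ : ℝ}
    (h : HasDirDeriv f (y + τ • v) v L) (lam : F →L[ℝ] ℝ) :
    HasDerivAt (fun σ : ℝ => lam (f (y + σ • v))) (lam L) τ := by
  rw [hasDerivAt_iff_tendsto_slope_zero]
  refine ((lam.continuous.tendsto L).comp h).congr fun t => ?_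
  simp [add_smul, add_assoc]

theorem exists_mem_nhds_forall_abs_lt_add_smul_mem [IsTopologicalAddGroup H] [ContinuousSMul ℝ H]
    {U : Set H} {x v : H} (hU : U ∈ 𝓝 x) :
    ∃ O ∈ 𝓝 x, ∃ ε > 0, ∀ y ∈ O, ∀ τ : ℝ, |τ| < ε → y + τ • v ∈ U := by
  have hcont : ContinuousAt (fun p : H × ℝ => p.1 + p.2 • v) (x, 0) := by fun_prop
  have hmem : (fun p : H × ℝ => p.1 + p.2 • v) ⁻¹' U ∈ 𝓝 (x, (0 : ℝ)) :=
    hcont.preimage_mem_nhds (by simpa using hU)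
  obtain ⟨O, hO, T, hT, hOT⟩ := mem_nhds_prod_iff.1 hmem
  obtain ⟨ε, hε, hball⟩ := Metric.mem_nhds_iff.1 hT
  exact ⟨O, hO, ε, hε, fun y hy τ hτ =>
    hOT (mk_mem_prod hy (hball (show τ ∈ Metric.ball 0 ε by simpa [Real.dist_eq] using hτ)))⟩

theorem slope_le_of_hasDirDeriv_off_countable [IsTopologicalAddGroup H] [ContinuousSMul ℝ H]
    {U A : Set H} {f g : H → F} {y v : H} {s u : ℝ}
    (hf : ContinuousOn f U) (hg : ContinuousOn g U)
    (hfg : ∀ z ∈ U, z ∉ A → HasDirDeriv f z v (g z))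
    (hcount : {τ : ℝ | y + τ • v ∈ A}.Countable) (hs : s ≠ 0)
    (hseg : ∀ τ ∈ uIcc 0 s, y + τ • v ∈ U) (lam : F →L[ℝ] ℝ)
    (hu : ∀ τ ∈ uIcc 0 s, lam (g (y + τ • v)) ≤ u) :
    s⁻¹ * (lam (f (y + s • v)) - lam (f y)) ≤ u := by
  have hline : Continuous fun τ : ℝ => y + τ • v := by fun_prop
  have key := slope_le_of_hasDerivAt_off_countable (φ := fun τ => lam (f (y + τ • v)))
    (φ' := fun τ => lam (g (y + τ • v))) hcount hs
    (lam.continuous.comp_continuousOn (hf.comp hline.continuousOn hseg))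
    (lam.continuous.comp_continuousOn (hg.comp hline.continuousOn hseg))
    (fun τ hτ => (hfg _ (hseg τ hτ.1) hτ.2).hasDerivAt_comp_line lam) hu
  simpa using key

theorem hasDirDeriv_of_mem_closure_countable_crossings [IsTopologicalAddGroup H]
    [ContinuousSMul ℝ H] [IsTopologicalAddGroup F] [ContinuousSMul ℝ F] [LocallyConvexSpace ℝ F]
    {U A : Set H} (hU : IsOpen U)
    {f g : H → F} {x v : H} (hx : x ∈ U) (hf : ContinuousOn f U) (hg : ContinuousOn g U)
    (hfg : ∀ z ∈ U, z ∉ A → HasDirDeriv f z v (g z))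
    (hA : x ∈ closure {y | {τ : ℝ | y + τ • v ∈ A}.Countable}) :
    HasDirDeriv f x v (g x) := by
  set S := {y | {τ : ℝ | y + τ • v ∈ A}.Countable}
  have : (𝓝[S] x).NeBot := mem_closure_iff_nhdsWithin_neBot.1 hA
  refine tendsto_sub_nhds_zero_iff.1 fun N hN => ?_
  obtain ⟨K, hK, hKconv, hKclosed, hKN⟩ := exists_mem_nhds_zero_convex_isClosed_subset hN
  have hgK : {z | z ∈ U ∧ g z - g x ∈ K} ∈ 𝓝 x := by
    have hsub : Tendsto (fun z => g z - g x) (𝓝 x) (𝓝 0) :=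
      tendsto_sub_nhds_zero_iff.2 ((hg.continuousAt (hU.mem_nhds hx)).tendsto)
    exact inter_mem (hU.mem_nhds hx) (hsub hK)
  obtain ⟨O, hO, ε, hε, hOε⟩ := exists_mem_nhds_forall_abs_lt_add_smul_mem (v := v) hgK
  rw [mem_map]
  filter_upwards [nhdsWithin_le_nhds (Metric.ball_mem_nhds (0 : ℝ) hε),
    self_mem_nhdsWithin] with s hsε hs0
  rw [mem_ball_zero_iff, Real.norm_eq_abs] at hsε
  refine hKN (by_contra fun hnot => ?_)
  obtain ⟨lam, u, hKu, hu⟩ := geometric_hahn_banach_closed_point hKconv hKclosed hnot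
  have hseg : ∀ τ ∈ uIcc 0 s, |τ| < ε := fun τ hτ =>
    lt_of_le_of_lt (by simpa using abs_sub_left_of_mem_uIcc hτ) hsε
  have hbound : ∀ᶠ y in 𝓝[S] x, lam (s⁻¹ • (f (y + s • v) - f y) - g x) ≤ u := by
    filter_upwards [nhdsWithin_le_nhds hO, self_mem_nhdsWithin] with y hyO hyS
    have key := slope_le_of_hasDirDeriv_off_countable hf hg hfg hyS hs0
      (fun τ hτ => (hOε y hyO τ (hseg τ hτ)).1) lam (u := u + lam (g x))
      (fun τ hτ => by
        have := hKu _ (hOε y hyO τ (hseg τ hτ)).2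
        rw [map_sub] at this
        linarith)
    simp only [map_sub, map_smul, smul_eq_mul]
    linarith
  have hlim : Tendsto (fun y => lam (s⁻¹ • (f (y + s • v) - f y) - g x)) (𝓝[S] x)
      (𝓝 (lam (s⁻¹ • (f (x + s • v) - f x) - g x))) := by
    have hxs : ContinuousAt f (x + s • v) :=
      hf.continuousAt (hU.mem_nhds (hOε x (mem_of_mem_nhds hO) s hsε).1)
    have hx' : ContinuousAt f x := hf.continuousAt (hU.mem_nhds hx)
    have : ContinuousAt (fun y => lam (s⁻¹ • (f (y + s • v) - f y) - g x)) x := by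
      have h1 : ContinuousAt (fun y => f (y + s • v)) x :=
        hxs.comp (f := fun y => y + s • v) (continuous_add_const _).continuousAt
      fun_prop
    exact this.tendsto.mono_left nhdsWithin_le_nhds
  exact (le_of_tendsto hlim hbound).not_gt hu

theorem BastianiFamily.hasDirDeriv_of_eqOn [IsTopologicalAddGroup H] [ContinuousSMul ℝ H]
    {k : ℕ∞} {W : Set H} {f : H → F} {D Φ : ℕ → H → (ℕ → H) → F}
    (hf : BastianiFamily k W f D) (hW : IsOpen W) {ℓ : ℕ} (hℓ : (ℓ : ℕ∞) < k)
    (hΦℓ : ∀ z ∈ W, ∀ w, Φ ℓ z w = D ℓ z w) (hΦℓ₁ : ∀ z ∈ W, ∀ w, Φ (ℓ + 1) z w = D (ℓ + 1) z w)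
    {z : H} (hz : z ∈ W) (v : ℕ → H) :
    HasDirDeriv (fun y => Φ ℓ y v) z (v ℓ) (Φ (ℓ + 1) z v) := by
  rw [hΦℓ₁ z hz v]
  exact (hf.deriv ℓ hℓ z hz v).congr_of_eventuallyEq
    (eventually_of_mem (hW.mem_nhds hz) fun y hy => hΦℓ y hy v)

end DirDeriv

theorem dense_setOf_fst_ne_zero {E : Type*} [TopologicalSpace E] :
    Dense {y : ℝ × E | y.1 ≠ 0} :=
  (dense_compl_singleton (0 : ℝ)).preimage isOpenMap_fst

theorem countable_setOf_add_smul_fst_eq_zero {E : Type*} [AddCommGroup E] [Module ℝ E]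
    {y v : ℝ × E} (hy : y.1 ≠ 0) : {τ : ℝ | (y + τ • v).1 = 0}.Countable := by
  refine Set.Subsingleton.countable fun τ₁ h₁ τ₂ h₂ => ?_
  simp only [mem_ofPred_eq, Prod.fst_add, Prod.smul_fst, smul_eq_mul] at h₁ h₂
  have hv : v.1 ≠ 0 := fun hv => hy (by simpa [hv] using h₁)
  exact mul_right_cancel₀ hv (by linarith)

theorem glue_across_hyperplane_general
    {E F : Type*}
    [AddCommGroup E] [Module ℝ E] [TopologicalSpace E] [IsTopologicalAddGroup E]
    [ContinuousSMul ℝ E]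
    [AddCommGroup F] [Module ℝ F] [TopologicalSpace F] [IsTopologicalAddGroup F]
    [ContinuousSMul ℝ F] [LocallyConvexSpace ℝ F]
    (k : ℕ∞) {V V' : Set E} (hV : IsOpen V)
    (hVV' : V ⊆ V')
    (fm fp : ℝ × E → F)
    (Dm Dp : ℕ → (ℝ × E) → (ℕ → ℝ × E) → F)
    (hfm : BastianiFamily k (Iio (0:ℝ) ×ˢ V) fm Dm)
    (hfp : BastianiFamily k (Ioi (0:ℝ) ×ˢ V) fp Dp)
    (Φ : ℕ → (ℝ × E) → (ℕ → ℝ × E) → F)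
    (hΦcont : ∀ ℓ : ℕ, (ℓ : ℕ∞) ≤ k →
      ContinuousOn (fun p : (ℝ × E) × (ℕ → ℝ × E) => Φ ℓ p.1 p.2)
        (((univ : Set ℝ) ×ˢ V') ×ˢ univ))
    (hΦm : ∀ ℓ : ℕ, (ℓ : ℕ∞) ≤ k → ∀ z ∈ Iio (0:ℝ) ×ˢ V, ∀ w, Φ ℓ z w = Dm ℓ z w)
    (hΦp : ∀ ℓ : ℕ, (ℓ : ℕ∞) ≤ k → ∀ z ∈ Ioi (0:ℝ) ×ˢ V, ∀ w, Φ ℓ z w = Dp ℓ z w)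
    (hΦ0 : ∀ z w, Φ 0 z w = Φ 0 z 0) :
    BastianiFamily k ((univ : Set ℝ) ×ˢ V) (fun z => Φ 0 z 0) Φ := by
  have hcont : ∀ ℓ : ℕ, (ℓ : ℕ∞) ≤ k →
      ContinuousOn (fun p : (ℝ × E) × (ℕ → ℝ × E) => Φ ℓ p.1 p.2) ((univ ×ˢ V) ×ˢ univ) :=
    fun ℓ hℓ => (hΦcont ℓ hℓ).mono (prod_mono (prod_mono subset_rfl hVV') subset_rfl)
  refine ⟨hΦ0, fun ℓ hℓ x hx v => ?_, hcont⟩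
  have hℓ₁ : ((ℓ + 1 : ℕ) : ℕ∞) ≤ k := by exact_mod_cast Order.add_one_le_of_lt hℓ
  have hslice : ∀ m : ℕ, (m : ℕ∞) ≤ k → ContinuousOn (fun y => Φ m y v) (univ ×ˢ V) :=
    fun m hm => (hcont m hm).comp (continuous_id.prodMk continuous_const).continuousOn
      fun y hy => ⟨hy, trivial⟩
  refine hasDirDeriv_of_mem_closure_countable_crossings (A := {z | z.1 = 0})
    (isOpen_univ.prod hV) hx (hslice ℓ hℓ.le) (hslice (ℓ + 1) hℓ₁) ?_ ?_
  · rintro z ⟨-, hzV⟩ hz0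
    rcases lt_or_gt_of_ne hz0 with hneg | hpos
    · exact hfm.hasDirDeriv_of_eqOn (isOpen_Iio.prod hV) hℓ (hΦm ℓ hℓ.le) (hΦm (ℓ + 1) hℓ₁)
        ⟨hneg, hzV⟩ v
    · exact hfp.hasDirDeriv_of_eqOn (isOpen_Ioi.prod hV) hℓ (hΦp ℓ hℓ.le) (hΦp (ℓ + 1) hℓ₁)
        ⟨hpos, hzV⟩ v
  · exact closure_mono (fun y hy => countable_setOf_add_smul_fst_eq_zero hy)
      ((dense_setOf_fst_ne_zero (E := E)).closure_eq ▸ mem_univ x)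

/-- Gluing corollary: let `V ⊆ E` be open nonempty, `V ⊆ V' ⊆ closure V`, and let
`f₋ ∈ C^k((−∞,0)×V, F)`, `f₊ ∈ C^k((0,∞)×V, F)` (Bastiani, with differential families
`Dm`, `Dp`). If for each `0 ≤ ℓ ≤ k` there is a continuous `Φ ℓ : ℝ × V' × (ℝ×E)^ℓ → F`
restricting to `d^ℓ f₋` on `(−∞,0)×V` and to `d^ℓ f₊` on `(0,∞)×V`, then
`f̃ := Φ⁰|_{ℝ×V}` is `C^k` on `ℝ×V` with `d^ℓ f̃ = Φ ℓ` there for all `0 ≤ ℓ ≤ k`. -/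
theorem glue_across_hyperplane
    {E F : Type*}
    [AddCommGroup E] [Module ℝ E] [TopologicalSpace E] [IsTopologicalAddGroup E]
    [ContinuousSMul ℝ E] [LocallyConvexSpace ℝ E] [T2Space E]
    [AddCommGroup F] [Module ℝ F] [TopologicalSpace F] [IsTopologicalAddGroup F]
    [ContinuousSMul ℝ F] [LocallyConvexSpace ℝ F] [T2Space F]
    (k : ℕ∞) {V V' : Set E} (hV : IsOpen V) (hVne : V.Nonempty)
    (hVV' : V ⊆ V') (hV'cl : V' ⊆ closure V)
    (fm fp : ℝ × E → F)
    (Dm Dp : ℕ → (ℝ × E) → (ℕ → ℝ × E) → F)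
    (hfm : BastianiFamily k (Iio (0:ℝ) ×ˢ V) fm Dm)
    (hfp : BastianiFamily k (Ioi (0:ℝ) ×ˢ V) fp Dp)
    (Φ : ℕ → (ℝ × E) → (ℕ → ℝ × E) → F)
    (hΦcont : ∀ ℓ : ℕ, (ℓ : ℕ∞) ≤ k →
      ContinuousOn (fun p : (ℝ × E) × (ℕ → ℝ × E) => Φ ℓ p.1 p.2)
        (((univ : Set ℝ) ×ˢ V') ×ˢ univ))
    (hΦm : ∀ ℓ : ℕ, (ℓ : ℕ∞) ≤ k → ∀ z ∈ Iio (0:ℝ) ×ˢ V, ∀ w, Φ ℓ z w = Dm ℓ z w)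
    (hΦp : ∀ ℓ : ℕ, (ℓ : ℕ∞) ≤ k → ∀ z ∈ Ioi (0:ℝ) ×ˢ V, ∀ w, Φ ℓ z w = Dp ℓ z w)
    (hΦ0 : ∀ z w, Φ 0 z w = Φ 0 z 0) :
    BastianiFamily k ((univ : Set ℝ) ×ˢ V) (fun z => Φ 0 z 0) Φ :=
  glue_across_hyperplane_general k hV hVV' fm fp Dm Dp hfm hfp Φ hΦcont hΦm hΦp hΦ0
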